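/- If S = {s_1 < ⋯ < s_n}, T = {t_1 < ⋯ < t_n} satisfy s_k < t_k for all k and S ∪ T = {i, i+1, …, i+2n−1} for some i, then d(R_{S,T}) = 0 in the DGA X; i.e., R_{S,T} is a cycle. -/

import Mathlib

set_option synthInstance.maxHeartbeats 1000000
set_option maxHeartbeats 1000000

open MvPolynomial Finset

/-- Index type for the generators `R_{ij}`, `0 ≤ i < j`. -/
abbrev SigmaX : Type := {p : ℕ × ℕ // p.1 < p.2}

/-- The polynomial algebra `X = F₂[R_{ij} : 0 ≤ i < j]`. -/
abbrev Xalg : Type := MvPolynomial SigmaX (ZMod 2)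

/-- The generator `R_{ij}` of `X` (with the convention `R_{ij} = 0` when `i ≥ j`). -/
noncomputable def Rgen (i j : ℕ) : Xalg :=
  if h : i < j then X ⟨(i, j), h⟩ else 0

/-- The differential of `X`, determined on generators by
`d R_{ij} = ∑_{i<k<j} R_{ik} R_{kj}` and extended as an `F₂`-linear derivation. -/
noncomputable def dX : Derivation (ZMod 2) Xalg Xalg :=
  mkDerivation (ZMod 2)
    (fun p : SigmaX => ∑ k ∈ Finset.Ioo p.1.1 p.1.2, Rgen p.1.1 k * Rgen k p.1.2)

/-- The `i`-th element of a finite set of naturals, in increasing order. -/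
noncomputable def enum (S : Finset ℕ) (i : Fin S.card) : ℕ := (S.orderIsoOfFin rfl i : ℕ)

/-- The determinant `R_{S,T} = det (R_{s_i t_j})`, where the finite sets `S`, `T` are viewed as
strictly increasing sequences; by convention it is `0` if `S.card ≠ T.card`. -/
noncomputable def RST (S T : Finset ℕ) : Xalg :=
  if h : S.card = T.card then
    Matrix.det (Matrix.of fun i j : Fin S.card => Rgen (enum S i) (enum T (Fin.cast h j)))
  else 0

lemma Rgen_eq_zero_of_le {i j : ℕ} (h : j ≤ i) : Rgen i j = 0 := by
  rw [Rgen, dif_neg (not_lt.mpr h)]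

lemma Rgen_lt_of_ne_zero {i j : ℕ} (h : Rgen i j ≠ 0) : i < j := by
  by_contra hc
  exact h (Rgen_eq_zero_of_le (not_lt.mp hc))

lemma dX_Rgen (i j : ℕ) : dX (Rgen i j) = ∑ k ∈ Finset.Ioo i j, Rgen i k * Rgen k j := by
  rw [Rgen]
  split_ifs with h
  · exact MvPolynomial.mkDerivation_X _ _ _
  · rw [Finset.Ioo_eq_empty h]
    simp

lemma deriv_prod {ι : Type*} [DecidableEq ι] (u : Finset ι) (f : ι → Xalg) :
    dX (∏ i ∈ u, f i) = ∑ j ∈ u, dX (f j) * ∏ i ∈ u.erase j, f i := by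
  classical
  induction u using Finset.induction_on with
  | empty => simp
  | @insert b v hb ih =>
    rw [Finset.prod_insert hb, Derivation.leibniz, Finset.sum_insert hb,
      Finset.erase_insert hb, smul_eq_mul, smul_eq_mul, ih, Finset.mul_sum]
    rw [add_comm]
    congr 1
    · ring
    · refine Finset.sum_congr rfl fun j hj => ?_
      rw [Finset.erase_insert_of_ne (show b ≠ j from fun h => hb (by rw [h]; exact hj)),
        Finset.prod_insert (fun h => hb (Finset.mem_of_mem_erase h))]
      ring

lemma xadd_self (x : Xalg) : x + x = 0 := by
  rw [← two_smul (ZMod 2) x, show (2 : ZMod 2) = 0 by decide, zero_smul]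

lemma main_aux (c a n : ℕ) (s t : Fin c → ℕ)
    (hs : ∀ i, s i ∈ Finset.Ico a (a + 2 * n)) (ht : ∀ i, t i ∈ Finset.Ico a (a + 2 * n))
    (hcover : ∀ k ∈ Finset.Ico a (a + 2 * n), (∃ i, s i = k) ∨ (∃ i, t i = k))
    (hs_inj : Function.Injective s) (ht_inj : Function.Injective t)
    (hdisj : ∀ i j, s i ≠ t j) :
    dX (∑ σ : Equiv.Perm (Fin c), ∏ i, Rgen (s i) (t (σ i))) = 0 := by
  classical
  set I : Finset ℕ := Finset.Ico a (a + 2 * n) with hI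
  set F : Equiv.Perm (Fin c) × Fin c × ℕ → Xalg := fun p =>
    Rgen (s p.2.1) p.2.2 * Rgen p.2.2 (t (p.1 p.2.1)) *
      ∏ i ∈ Finset.univ.erase p.2.1, Rgen (s i) (t (p.1 i)) with hF
  have step1 : dX (∑ σ : Equiv.Perm (Fin c), ∏ i, Rgen (s i) (t (σ i)))
      = ∑ p ∈ (Finset.univ ×ˢ Finset.univ ×ˢ I :
          Finset (Equiv.Perm (Fin c) × Fin c × ℕ)), F p := by
    rw [map_sum, Finset.sum_product]
    refine Finset.sum_congr rfl fun σ _ => ?_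
    rw [Finset.sum_product, deriv_prod]
    refine Finset.sum_congr rfl fun j _ => ?_
    rw [dX_Rgen, Finset.sum_mul]
    refine Finset.sum_subset ?_ ?_
    · intro k hk
      rw [Finset.mem_Ioo] at hk
      rw [hI, Finset.mem_Ico]
      exact ⟨le_trans (Finset.mem_Ico.mp (hs j)).1 hk.1.le,
        lt_trans hk.2 (Finset.mem_Ico.mp (ht (σ j))).2⟩
    · intro k _ hk
      rw [Finset.mem_Ioo] at hk
      rcases lt_or_ge (s j) k with h1 | h1
      · rcases lt_or_ge k (t (σ j)) with h2 | h2
        · exact absurd ⟨h1, h2⟩ hk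
        · simp [Rgen_eq_zero_of_le h2]
      · simp [Rgen_eq_zero_of_le h1]
  rw [step1]
  -- the involution
  set g : Equiv.Perm (Fin c) × Fin c × ℕ → Equiv.Perm (Fin c) × Fin c × ℕ := fun p =>
    if h : ∃ i, s i = p.2.2 then (p.1 * Equiv.swap p.2.1 h.choose, p.2.1, p.2.2)
    else if h : ∃ i, t i = p.2.2 then
      (p.1 * Equiv.swap p.2.1 (p.1⁻¹ h.choose), p.1⁻¹ h.choose, p.2.2)
    else p with hg
  -- product rewriting lemma
  have prodswap : ∀ (σ : Equiv.Perm (Fin c)) (j m : Fin c), m ≠ j →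
      ∏ i ∈ Finset.univ.erase j, Rgen (s i) (t ((σ * Equiv.swap j m) i))
        = Rgen (s m) (t (σ j)) *
          ∏ i ∈ (Finset.univ.erase j).erase m, Rgen (s i) (t (σ i)) := by
    intro σ j m hmj
    have hm : m ∈ Finset.univ.erase j := Finset.mem_erase.mpr ⟨hmj, Finset.mem_univ m⟩
    rw [← Finset.mul_prod_erase _ _ hm]
    congr 1
    · rw [Equiv.Perm.mul_apply, Equiv.swap_apply_right]
    · refine Finset.prod_congr rfl fun i hi => ?_
      rw [Finset.mem_erase, Finset.mem_erase] at hi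
      rw [Equiv.Perm.mul_apply, Equiv.swap_apply_of_ne_of_ne hi.2.1 hi.1]
  have prodsplit : ∀ (σ : Equiv.Perm (Fin c)) (j m : Fin c), m ≠ j →
      ∏ i ∈ Finset.univ.erase j, Rgen (s i) (t (σ i))
        = Rgen (s m) (t (σ m)) *
          ∏ i ∈ (Finset.univ.erase j).erase m, Rgen (s i) (t (σ i)) := by
    intro σ j m hmj
    rw [← Finset.mul_prod_erase _ _ (Finset.mem_erase.mpr ⟨hmj, Finset.mem_univ m⟩)]
  have gS : ∀ (σ : Equiv.Perm (Fin c)) (j : Fin c) (k : ℕ) (h : ∃ i, s i = k),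
      g (σ, j, k) = (σ * Equiv.swap j h.choose, j, k) := by
    intro σ j k h
    rw [hg]
    dsimp only
    rw [dif_pos h]
  have gT : ∀ (σ : Equiv.Perm (Fin c)) (j : Fin c) (k : ℕ)
      (h1 : ¬∃ i, s i = k) (h2 : ∃ i, t i = k),
      g (σ, j, k) = (σ * Equiv.swap j (σ⁻¹ h2.choose), σ⁻¹ h2.choose, k) := by
    intro σ j k h1 h2
    rw [hg]
    dsimp only
    rw [dif_neg h1, dif_pos h2]
  have gN : ∀ (σ : Equiv.Perm (Fin c)) (j : Fin c) (k : ℕ)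
      (h1 : ¬∃ i, s i = k) (h2 : ¬∃ i, t i = k), g (σ, j, k) = (σ, j, k) := by
    intro σ j k h1 h2
    rw [hg]
    dsimp only
    rw [dif_neg h1, dif_neg h2]
  refine Finset.sum_involution (fun p _ => g p) ?_ ?_ ?_ ?_
  · -- F p + F (g p) = 0; in char 2 enough that F (g p) = F p
    rintro ⟨σ, j, k⟩ _
    show F (σ, j, k) + F (g (σ, j, k)) = 0
    suffices h : F (g (σ, j, k)) = F (σ, j, k) by rw [h]; exact xadd_self _
    by_cases h1 : ∃ i, s i = k
    · rw [gS σ j k h1]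
      set m := h1.choose with hm
      have hsm : s m = k := h1.choose_spec
      rcases eq_or_ne m j with hmj | hmj
      · rw [hmj, Equiv.swap_self]
        simp [hF]
      · rw [hF]
        dsimp only
        rw [prodswap σ j m hmj, prodsplit σ j m hmj,
          Equiv.Perm.mul_apply, Equiv.swap_apply_left, ← hsm]
        ring
    · by_cases h2 : ∃ i, t i = k
      · rw [gT σ j k h1 h2]
        set m := h2.choose with hm
        have htm : t m = k := h2.choose_spec
        rcases eq_or_ne (σ⁻¹ m) j with hmj | hmj
        · rw [hmj, Equiv.swap_self]
          simp [hF]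
        · rw [hF]
          dsimp only
          have hjj' : σ (σ⁻¹ m) = m := Equiv.apply_symm_apply σ m
          rw [show Equiv.swap j (σ⁻¹ m) = Equiv.swap (σ⁻¹ m) j from Equiv.swap_comm _ _]
          rw [prodswap σ (σ⁻¹ m) j (Ne.symm hmj), prodsplit σ j (σ⁻¹ m) hmj,
            Equiv.Perm.mul_apply, Equiv.swap_apply_left, hjj', htm,
            Finset.erase_right_comm]
          ring
      · rw [gN σ j k h1 h2]
  · -- F p ≠ 0 → g p ≠ p
    rintro ⟨σ, j, k⟩ _ hne
    show g (σ, j, k) ≠ (σ, j, k)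
    by_cases h1 : ∃ i, s i = k
    · rw [gS σ j k h1]
      set m := h1.choose with hm
      have hsm : s m = k := h1.choose_spec
      rcases eq_or_ne m j with hmj | hmj
      · exfalso
        apply hne
        rw [hF]
        dsimp only
        rw [← hsm, hmj, Rgen_eq_zero_of_le le_rfl, zero_mul, zero_mul]
      · intro hc
        have h3 := congrArg Prod.fst hc
        dsimp only at h3
        have h4 : Equiv.swap j m = 1 := mul_left_cancel (a := σ) (by rw [h3, mul_one])
        have h5 := congrArg (fun e : Equiv.Perm (Fin c) => e j) h4
        simp only [Equiv.swap_apply_left, Equiv.Perm.one_apply] at h5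
        exact hmj h5
    · by_cases h2 : ∃ i, t i = k
      · rw [gT σ j k h1 h2]
        set m := h2.choose with hm
        have htm : t m = k := h2.choose_spec
        rcases eq_or_ne (σ⁻¹ m) j with hmj | hmj
        · exfalso
          apply hne
          rw [hF]
          dsimp only
          have h3 : σ j = m := by rw [← hmj, ← Equiv.Perm.mul_apply, mul_inv_cancel, Equiv.Perm.one_apply]
          rw [h3, htm, Rgen_eq_zero_of_le le_rfl, mul_zero, zero_mul]
        · intro hc
          have h3 := congrArg (fun p : Equiv.Perm (Fin c) × Fin c × ℕ => p.2.1) hc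
          dsimp only at h3
          exact hmj h3
      · -- impossible: F p = 0 here
        exfalso
        apply hne
        rw [hF]
        dsimp only
        by_contra h0
        have hAB : Rgen (s j) k * Rgen k (t (σ j)) ≠ 0 := left_ne_zero_of_mul h0
        have hA : Rgen (s j) k ≠ 0 := left_ne_zero_of_mul hAB
        have hB : Rgen k (t (σ j)) ≠ 0 := right_ne_zero_of_mul hAB
        have hk1 : s j < k := Rgen_lt_of_ne_zero hA
        have hk2 : k < t (σ j) := Rgen_lt_of_ne_zero hB
        have hkI : k ∈ I := by
          rw [hI, Finset.mem_Ico]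
          exact ⟨le_trans (Finset.mem_Ico.mp (hs j)).1 hk1.le,
            lt_trans hk2 (Finset.mem_Ico.mp (ht (σ j))).2⟩
        rcases hcover k hkI with h | h
        · exact h1 h
        · exact h2 h
  · -- g p stays in the set
    rintro ⟨σ, j, k⟩ hp
    show g (σ, j, k) ∈ _
    rw [Finset.mem_product, Finset.mem_product] at hp
    rw [hg]
    dsimp only
    split_ifs <;>
      simp only [Finset.mem_product, Finset.mem_univ, true_and] <;> exact hp.2.2
  · -- involution
    rintro ⟨σ, j, k⟩ _
    show g (g (σ, j, k)) = (σ, j, k)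
    by_cases h1 : ∃ i, s i = k
    · rw [gS σ j k h1, gS _ _ _ h1]
      rw [mul_assoc, Equiv.swap_mul_self, mul_one]
    · by_cases h2 : ∃ i, t i = k
      · rw [gT σ j k h1 h2]
        set m := h2.choose with hm
        set σ' := σ * Equiv.swap j (σ⁻¹ m) with hσ'
        rw [gT σ' (σ⁻¹ m) k h1 h2]
        have key : σ'⁻¹ m = j := by
          rw [Equiv.Perm.inv_eq_iff_eq, hσ', Equiv.Perm.mul_apply, Equiv.swap_apply_left,
            ← Equiv.Perm.mul_apply, mul_inv_cancel, Equiv.Perm.one_apply]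
        rw [key, hσ']
        rw [show Equiv.swap (σ⁻¹ m) j = Equiv.swap j (σ⁻¹ m) from Equiv.swap_comm _ _,
          mul_assoc, Equiv.swap_mul_self, mul_one]
      · rw [gN σ j k h1 h2, gN σ j k h1 h2]

/-- If `s_k < t_k` for all `k` and `S ∪ T = {a, a+1, …, a+2n−1}`, then `R_{S,T}` is a cycle. -/
theorem dX_RST_eq_zero (n a : ℕ) (S T : Finset ℕ) (hS : S.card = n) (hT : T.card = n)
    (hU : S ∪ T = Finset.Ico a (a + 2 * n))
    (hlt : ∀ i : Fin S.card, enum S i < enum T (Fin.cast (hS.trans hT.symm) i)) :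
    dX (RST S T) = 0 := by
  classical
  have h' : S.card = T.card := hS.trans hT.symm
  set s : Fin S.card → ℕ := fun i => enum S i with hs_def
  set t : Fin S.card → ℕ := fun i => enum T (Fin.cast h' i) with ht_def
  have hRST : RST S T = ∑ σ : Equiv.Perm (Fin S.card), ∏ i, Rgen (s i) (t (σ i)) := by
    rw [RST, dif_pos h', ← Matrix.det_transpose, Matrix.det_apply']
    refine Finset.sum_congr rfl fun σ _ => ?_
    rcases Int.units_eq_one_or (Equiv.Perm.sign σ) with h | h <;>
      rw [h] <;>
      simp only [Units.val_one, Int.cast_one, one_mul, Units.val_neg, Int.cast_neg,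
        CharTwo.neg_eq] <;>
      rfl
  -- basic membership facts
  have hSsub : S ⊆ Finset.Ico a (a + 2 * n) := hU ▸ Finset.subset_union_left
  have hTsub : T ⊆ Finset.Ico a (a + 2 * n) := hU ▸ Finset.subset_union_right
  have hsmem : ∀ i, s i ∈ S := fun i => (S.orderIsoOfFin rfl i).2
  have htmem : ∀ i, t i ∈ T := fun i => (T.orderIsoOfFin rfl (Fin.cast h' i)).2
  -- disjointness
  have hdisjST : S ∩ T = ∅ := by
    have hcard : (S ∪ T).card = 2 * n := by rw [hU, Nat.card_Ico]; omega
    have := Finset.card_union_add_card_inter S T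
    rw [hcard, hS, hT] at this
    have h0 : (S ∩ T).card = 0 := by omega
    exact Finset.card_eq_zero.mp h0
  rw [hRST]
  refine main_aux S.card a n s t (fun i => hSsub (hsmem i)) (fun i => hTsub (htmem i))
    ?_ ?_ ?_ ?_
  · intro k hk
    have : k ∈ S ∪ T := by rw [hU]; exact hk
    rcases Finset.mem_union.mp this with h | h
    · left
      refine ⟨(S.orderIsoOfFin rfl).symm ⟨k, h⟩, ?_⟩
      show ((S.orderIsoOfFin rfl) ((S.orderIsoOfFin rfl).symm ⟨k, h⟩) : ℕ) = k
      rw [OrderIso.apply_symm_apply]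
    · right
      refine ⟨Fin.cast h'.symm ((T.orderIsoOfFin rfl).symm ⟨k, h⟩), ?_⟩
      show ((T.orderIsoOfFin rfl) (Fin.cast h' (Fin.cast h'.symm _)) : ℕ) = k
      have : Fin.cast h' (Fin.cast h'.symm ((T.orderIsoOfFin rfl).symm ⟨k, h⟩))
          = (T.orderIsoOfFin rfl).symm ⟨k, h⟩ := by
        ext
        rfl
      rw [this, OrderIso.apply_symm_apply]
  · intro i j hij
    exact (S.orderIsoOfFin rfl).injective (Subtype.ext hij)
  · intro i j hij
    have := (T.orderIsoOfFin rfl).injective (Subtype.ext hij)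
    have h2 := congrArg Fin.val this
    exact Fin.ext h2
  · intro i j hc
    have h1 : s i ∈ S := hsmem i
    have h2 : s i ∈ T := hc ▸ htmem j
    have : s i ∈ S ∩ T := Finset.mem_inter.mpr ⟨h1, h2⟩
    rw [hdisjST] at this
    exact absurd this (Finset.notMem_empty _)
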